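/- In TSP, for the specification X = 1 + a.(Y·X), Y = 1 + b.1 + a.(Y·Y), the state Y^n·X has, for every 0 ≤ k < n, a b-transition to Y^k·X; moreover the states Y^m·X and Y^n·X are non-bisimilar for m ≠ n. Hence the branching degree of states in this process graph is unbounded. -/
import Mathlib


structure LTS (S : Type*) (A : Type*) where
  Tr : S → A → S → Prop
  Acc : S → Prop

def IsBisimulation {S A : Type*} (L : LTS S A) (R : S → S → Prop) : Prop :=
  Symmetric R ∧ ∀ s t, R s t →
    (∀ a s', L.Tr s a s' → ∃ t', L.Tr t a t' ∧ R s' t') ∧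
    (L.Acc s → L.Acc t)

def Bisimilar {S A : Type*} (L : LTS S A) (s t : S) : Prop :=
  ∃ R, IsBisimulation L R ∧ R s t

/-- TSP process expressions: 0, 1, action prefix, choice, sequential
composition, and identifiers from `V`. -/
inductive Expr (A V : Type) where
  | zero | one
  | act (a : A) (p : Expr A V)
  | add (p q : Expr A V)
  | seq (p q : Expr A V)
  | var (X : V)

/-- The acceptance predicate ↓ for TSP, relative to a specification Δ. -/
inductive EAcc {A V : Type} (Δ : V → Expr A V) : Expr A V → Prop
  | one : EAcc Δ .one
  | addL {p q} : EAcc Δ p → EAcc Δ (Expr.add p q)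
  | addR {p q} : EAcc Δ q → EAcc Δ (Expr.add p q)
  | seq {p q} : EAcc Δ p → EAcc Δ q → EAcc Δ (Expr.seq p q)
  | var {X} : EAcc Δ (Δ X) → EAcc Δ (.var X)

/-- The TSP transition relation (with the transparent rule: if `p↓` and
`q →a q'` then `p·q →a q'`). -/
inductive EStep {A V : Type} (Δ : V → Expr A V) : Expr A V → A → Expr A V → Prop
  | act {a p} : EStep Δ (.act a p) a p
  | addL {p q a p'} : EStep Δ p a p' → EStep Δ (Expr.add p q) a p'
  | addR {p q a q'} : EStep Δ q a q' → EStep Δ (Expr.add p q) a q'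
  | seqL {p q a p'} : EStep Δ p a p' → EStep Δ (Expr.seq p q) a (p'.seq q)
  | seqR {p q a q'} : EAcc Δ p → EStep Δ q a q' → EStep Δ (Expr.seq p q) a q'
  | var {X a p'} : EStep Δ (Δ X) a p' → EStep Δ (.var X) a p'

def exprLTS {A V : Type} (Δ : V → Expr A V) : LTS (Expr A V) A :=
  ⟨EStep Δ, EAcc Δ⟩

inductive Lab where
  | a | b

inductive Id2 where
  | X | Y

/-- The TSP specification `X = 1 + a.(Y·X)`, `Y = 1 + b.1 + a.(Y·Y)`. -/
def Δ7 : Id2 → Expr Lab Id2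
  | .X => (Expr.one).add (.act .a (Expr.seq (.var .Y) (.var .X)))
  | .Y => ((Expr.one).add (.act .b .one)).add (.act .a (Expr.seq (.var .Y) (.var .Y)))

/-- `Y^n·X`: the n-fold sequential composition of `Y` followed by `X`. -/
def ynx : ℕ → Expr Lab Id2
  | 0 => .var .X
  | n + 1 => Expr.seq (.var .Y) (ynx n)

section Aux

/-- The relation witnessing `1·p ~ p`. -/
def RB : Expr Lab Id2 → Expr Lab Id2 → Prop :=
  fun s t => s = t ∨ s = .seq .one t ∨ t = .seq .one s

lemma oneSeq_bisim (p : Expr Lab Id2) :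
    Bisimilar (exprLTS Δ7) (.seq .one p) p := by
  refine ⟨RB, ⟨?_, ?_⟩, Or.inr (Or.inl rfl)⟩
  · intro s t h
    rcases h with h | h | h
    · exact Or.inl h.symm
    · exact Or.inr (Or.inr h)
    · exact Or.inr (Or.inl h)
  · intro s t h
    rcases h with rfl | rfl | rfl
    · exact ⟨fun a s' h => ⟨s', h, Or.inl rfl⟩, id⟩
    · constructor
      · intro a s' h
        cases h with
        | seqL h1 => cases h1
        | seqR _ h2 => exact ⟨s', h2, Or.inl rfl⟩
      · intro h; cases h; assumption
    · constructor
      · intro a s' h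
        exact ⟨s', EStep.seqR EAcc.one h, Or.inl rfl⟩
      · intro h; exact EAcc.seq EAcc.one h

lemma bisim_symm {s t : Expr Lab Id2}
    (h : Bisimilar (exprLTS Δ7) s t) : Bisimilar (exprLTS Δ7) t s := by
  obtain ⟨R, hR, hst⟩ := h
  exact ⟨R, hR, hR.1 hst⟩

/-- `Y` is accepting. -/
lemma accY : EAcc Δ7 (.var .Y) :=
  EAcc.var (EAcc.addL (EAcc.addL EAcc.one))

/-- The `b`-transitions of `Y^n·X`. -/
lemma trans_b : ∀ n k : ℕ, k < n →
    EStep Δ7 (ynx n) .b (.seq .one (ynx k)) := by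
  intro n
  induction n with
  | zero => intro k hk; omega
  | succ n ih =>
    intro k hk
    rcases Nat.lt_succ_iff_lt_or_eq.mp hk with h | rfl
    · exact EStep.seqR accY (ih k h)
    · exact EStep.seqL (EStep.var (EStep.addL (EStep.addR EStep.act)))

/-- `p` can do `n` consecutive `b`-steps. -/
def CanB : ℕ → Expr Lab Id2 → Prop
  | 0, _ => True
  | n + 1, p => ∃ q, EStep Δ7 p .b q ∧ CanB n q

lemma canB_of_bisim : ∀ n {s t : Expr Lab Id2},
    Bisimilar (exprLTS Δ7) s t → CanB n s → CanB n t := by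
  intro n
  induction n with
  | zero => intro s t _ _; trivial
  | succ n ih =>
    rintro s t ⟨R, hR, hst⟩ ⟨q, hstep, hc⟩
    obtain ⟨q', hstep', hq'⟩ := ((hR.2 s t hst).1) .b q hstep
    exact ⟨q', hstep', ih ⟨R, hR, hq'⟩ hc⟩

lemma canB_mono : ∀ n m (p : Expr Lab Id2), CanB n p → m ≤ n → CanB m p := by
  intro n
  induction n with
  | zero => intro m p h hm; interval_cases m; trivial
  | succ n ih =>
    intro m p h hm
    match m with
    | 0 => trivial
    | m + 1 =>
      obtain ⟨q, hstep, hc⟩ := h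
      exact ⟨q, hstep, ih m q hc (Nat.succ_le_succ_iff.mp hm)⟩

lemma canB_seq_one : ∀ n (p : Expr Lab Id2),
    CanB n p → CanB n (.seq .one p) := by
  intro n p h
  match n with
  | 0 => trivial
  | n + 1 =>
    obtain ⟨q, hstep, hc⟩ := h
    exact ⟨q, EStep.seqR EAcc.one hstep, hc⟩

lemma canB_ynx : ∀ n, CanB n (ynx n) := by
  intro n
  induction n with
  | zero => trivial
  | succ n ih =>
    exact ⟨.seq .one (ynx n), trans_b (n + 1) n (Nat.lt_succ_self n),
      canB_seq_one n (ynx n) ih⟩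

/-- Inversion: the only `b`-steps of `Y^n·X` go to `1·(Y^j·X)` with `j < n`. -/
lemma step_b_inv : ∀ n q, EStep Δ7 (ynx n) .b q →
    ∃ j, j < n ∧ q = .seq .one (ynx j) := by
  intro n
  induction n with
  | zero =>
    intro q h
    cases h with
    | var h' =>
      cases h' with
      | addL h'' => cases h''
      | addR h'' => cases h''
  | succ n ih =>
    intro q h
    cases h with
    | seqL h' =>
      cases h' with
      | var h'' =>
        cases h'' with
        | addL h3 =>
          cases h3 with
          | addL h4 => cases h4
          | addR h4 => cases h4; exact ⟨n, Nat.lt_succ_self n, rfl⟩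
        | addR h3 => cases h3
    | seqR _ h' =>
      obtain ⟨j, hj, rfl⟩ := ih q h'
      exact ⟨j, Nat.lt_succ_of_lt hj, rfl⟩

lemma not_canB_seq : ∀ n, ¬ CanB (n + 1) (.seq .one (ynx n)) := by
  intro n
  induction n using Nat.strong_induction_on with
  | _ n ih =>
    rintro ⟨q, hstep, hc⟩
    cases hstep with
    | seqL h' => cases h'
    | seqR _ h' =>
      obtain ⟨j, hj, rfl⟩ := step_b_inv n q h'
      exact ih j hj (canB_mono n (j + 1) _ hc hj)

lemma not_canB_ynx : ∀ n, ¬ CanB (n + 1) (ynx n) := by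
  rintro n ⟨q, hstep, hc⟩
  obtain ⟨j, hj, rfl⟩ := step_b_inv n q hstep
  exact not_canB_seq j (canB_mono n (j + 1) _ hc hj)

end Aux

/-- `Y^n·X` has, for every `k < n`, a `b`-transition to (a state
bisimilar to) `Y^k·X`; the states `Y^m·X` and `Y^n·X` are pairwise
non-bisimilar for `m ≠ n`; hence the branching degree of states in this
process graph is unbounded. -/
theorem tsp_unbounded_branching :
    (∀ n k : ℕ, k < n → ∃ q, EStep Δ7 (ynx n) .b q ∧ Bisimilar (exprLTS Δ7) q (ynx k)) ∧
    (∀ m n : ℕ, m ≠ n → ¬ Bisimilar (exprLTS Δ7) (ynx m) (ynx n)) ∧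
    (∀ N : ℕ, ∃ (p : Expr Lab Id2) (f : Fin N → Expr Lab Id2),
      (∀ i, EStep Δ7 p .b (f i)) ∧
      ∀ i j, i ≠ j → ¬ Bisimilar (exprLTS Δ7) (f i) (f j)) := by
  refine ⟨?_, ?_, ?_⟩
  · intro n k hk
    exact ⟨.seq .one (ynx k), trans_b n k hk, oneSeq_bisim (ynx k)⟩
  · intro m n hmn hb
    rcases Nat.lt_or_ge m n with h | h
    · exact not_canB_ynx m (canB_of_bisim (m + 1) (bisim_symm hb)
        (canB_mono n (m + 1) _ (canB_ynx n) h))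
    · have h' : n < m := lt_of_le_of_ne h (fun e => hmn e.symm)
      exact not_canB_ynx n (canB_of_bisim (n + 1) hb
        (canB_mono m (n + 1) _ (canB_ynx m) h'))
  · intro N
    refine ⟨ynx N, fun i => .seq .one (ynx i.val), fun i => trans_b N i.val i.isLt, ?_⟩
    intro i j hij hb
    rcases Nat.lt_or_ge i.val j.val with h | h
    · exact not_canB_seq i.val (canB_of_bisim (i.val + 1) (bisim_symm hb)
        (canB_seq_one _ _ (canB_mono j.val (i.val + 1) _ (canB_ynx j.val) h)))
    · have h' : j.val < i.val :=
        lt_of_le_of_ne h (fun e => hij (Fin.ext e.symm))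
      exact not_canB_seq j.val (canB_of_bisim (j.val + 1) hb
        (canB_seq_one _ _ (canB_mono i.val (j.val + 1) _ (canB_ynx i.val) h')))
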